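/- arXiv:1110.3005 — 4 statements merged into one kernel-verified Lean document; each statement's English description precedes it below -/
import Mathlib

section
/- For an irrational x₀ ∈ (0,1) with futures xₙ and pasts yₙ, and approximation coefficients θₙ, the identity 1/θₙ = −(xₙ − yₙ)/(xₙ yₙ) holds for all n ≥ 1; equivalently, Ψ(xₙ, yₙ) = (θₙ₋₁, θₙ) where Ψ(x,y) = (1/(x−y), −xy/(x−y)). -/
noncomputable section

open Real

/-- The Gauss map `T x = 1/x - ⌊1/x⌋`. -/
def gauss (x : ℝ) : ℝ := 1 / x - ⌊1 / x⌋

/-- The future of `x₀` at time `n`: `xₙ = Tⁿ x₀`. -/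
def fut (x₀ : ℝ) (n : ℕ) : ℝ := gauss^[n] x₀

/-- The `n`-th partial quotient (digit) of `x₀` (meaningful for `n ≥ 1`):
`aₙ = ⌊1/xₙ₋₁⌋`. -/
def digit (x₀ : ℝ) (n : ℕ) : ℤ := ⌊1 / fut x₀ (n - 1)⌋

/-- Numerators of the continued fraction convergents of `x₀ ∈ (0,1)`. -/
def num (x₀ : ℝ) : ℕ → ℤ
  | 0 => 0
  | 1 => 1
  | (n + 2) => digit x₀ (n + 2) * num x₀ (n + 1) + num x₀ n

/-- Denominators of the continued fraction convergents of `x₀ ∈ (0,1)`. -/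
def den (x₀ : ℝ) : ℕ → ℤ
  | 0 => 1
  | 1 => digit x₀ 1
  | (n + 2) => digit x₀ (n + 2) * den x₀ (n + 1) + den x₀ n

/-- The `n`-th approximation coefficient `θₙ = qₙ² |x₀ - pₙ/qₙ|`. -/
def theta (x₀ : ℝ) (n : ℕ) : ℝ :=
  (den x₀ n : ℝ) ^ 2 * |x₀ - (num x₀ n : ℝ) / (den x₀ n : ℝ)|

/-- Finite continued fraction `[b₁,...,bₖ] = 1/(b₁ + 1/(⋯ + 1/bₖ))`, with `[∅] = 0`. -/
def fcf : List ℝ → ℝ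
  | [] => 0
  | (b :: bs) => 1 / (b + fcf bs)

/-- The past of `x₀` at time `n ≥ 1`: `yₙ = -aₙ - [aₙ₋₁, aₙ₋₂, ..., a₁]`. -/
def past (x₀ : ℝ) (n : ℕ) : ℝ :=
  -(digit x₀ n : ℝ) -
    fcf (((List.range (n - 1)).map fun i => ((digit x₀ (n - 1 - i) : ℤ) : ℝ)))

/-- The domain `Ω = (0,1) × (-∞,-1)`. -/
def Omega : Set (ℝ × ℝ) := Set.Ioo (0 : ℝ) 1 ×ˢ Set.Iio (-1 : ℝ)

/-- The open triangle `Γ` with vertices `(0,0)`, `(1,0)`, `(0,1)`. -/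
def Gam : Set (ℝ × ℝ) := {p | 0 < p.1 ∧ 0 < p.2 ∧ p.1 + p.2 < 1}

/-- The map `Ψ(x,y) = (1/(x-y), -xy/(x-y))`. -/
def Psi (p : ℝ × ℝ) : ℝ × ℝ := (1 / (p.1 - p.2), -(p.1 * p.2) / (p.1 - p.2))

/-- The map `Φ(u,v) = ((1-√(1-4uv))/(2u), -(1+√(1-4uv))/(2u))`. -/
def Phi (p : ℝ × ℝ) : ℝ × ℝ :=
  ((1 - Real.sqrt (1 - 4 * p.1 * p.2)) / (2 * p.1),
   -((1 + Real.sqrt (1 - 4 * p.1 * p.2)) / (2 * p.1)))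

/-- The natural extension map `𝒯(x,y) = (1/x - ⌊1/x⌋, 1/y - ⌊1/x⌋)`. -/
def natExt (p : ℝ × ℝ) : ℝ × ℝ := (1 / p.1 - ⌊1 / p.1⌋, 1 / p.2 - ⌊1 / p.1⌋)

/-!
Writing `Dₙ = qₙ₊₁ + qₙ xₙ₊₁`, the recursion `xₙ (aₙ₊₁ + xₙ₊₁) = 1` gives the classical formula
`x₀ = (pₙ₊₁ + pₙ xₙ₊₁) / Dₙ`; together with `pₙ₊₁ qₙ - pₙ qₙ₊₁ = (-1)ⁿ` this yields
`θₙ = qₙ / Dₙ` and `θₙ₊₁ = qₙ₊₁ xₙ₊₁ / Dₙ`. On the other side the past is a ratio of consecutive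
denominators, `yₙ₊₁ = -qₙ₊₁ / qₙ`, so `xₙ₊₁ - yₙ₊₁ = Dₙ / qₙ`, and both coordinates of `Ψ` match;
the formula for `1 / θₙ` is the second coordinate inverted.
-/

open Set

lemma gauss_eq_fract (x : ℝ) : gauss x = Int.fract (1 / x) := rfl

lemma Irrational.gauss {x : ℝ} (h : Irrational x) : Irrational (gauss x) := by
  simpa [_root_.gauss, one_div] using h.inv.sub_intCast ⌊x⁻¹⌋

lemma fut_zero (x₀ : ℝ) : fut x₀ 0 = x₀ := rfl

lemma fut_succ (x₀ : ℝ) (n : ℕ) : fut x₀ (n + 1) = gauss (fut x₀ n) :=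
  Function.iterate_succ_apply' gauss n x₀

lemma Irrational.fut {x₀ : ℝ} (h : Irrational x₀) (n : ℕ) : Irrational (fut x₀ n) := by
  induction n with
  | zero => exact h
  | succ n ih => rw [fut_succ]; exact ih.gauss

lemma fut_mem_Ioo {x₀ : ℝ} (hx : x₀ ∈ Ioo (0 : ℝ) 1) (hirr : Irrational x₀) (n : ℕ) :
    fut x₀ n ∈ Ioo (0 : ℝ) 1 := by
  cases n with
  | zero => exact hx
  | succ n =>
    rw [fut_succ, gauss_eq_fract]
    refine ⟨(Int.fract_nonneg _).lt_of_ne ?_, Int.fract_lt_one _⟩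
    rw [← gauss_eq_fract, ← fut_succ]
    exact (hirr.fut _).ne_zero.symm

lemma one_le_digit_succ {x₀ : ℝ} {n : ℕ} (h : fut x₀ n ∈ Ioc (0 : ℝ) 1) :
    1 ≤ digit x₀ (n + 1) := by
  rw [digit, Nat.add_sub_cancel, Int.le_floor, Int.cast_one, le_div_iff₀ h.1, one_mul]
  exact h.2

lemma fut_mul_digit_add_fut {x₀ : ℝ} {n : ℕ} (h : fut x₀ n ≠ 0) :
    fut x₀ n * (digit x₀ (n + 1) + fut x₀ (n + 1)) = 1 := by
  rw [fut_succ, gauss, digit, Nat.add_sub_cancel]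
  field_simp
  ring

lemma den_pos {x₀ : ℝ} (hdig : ∀ n, 1 ≤ digit x₀ (n + 1)) (n : ℕ) : 0 < den x₀ n := by
  induction n using Nat.twoStepInduction with
  | zero => exact one_pos
  | one => exact hdig 0
  | more n ih₀ ih₁ =>
    have := hdig (n + 1)
    show 0 < digit x₀ (n + 2) * den x₀ (n + 1) + den x₀ n
    nlinarith

lemma num_mul_den_sub_num_mul_den (x₀ : ℝ) (n : ℕ) :
    num x₀ (n + 1) * den x₀ n - num x₀ n * den x₀ (n + 1) = (-1) ^ n := by
  induction n with
  | zero => simp [num, den]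
  | succ n ih =>
    simp only [num, den]
    linear_combination (-1 : ℤ) * ih

lemma self_mul_den_add_den_mul_fut {x₀ : ℝ} (hne : ∀ n, fut x₀ n ≠ 0) (n : ℕ) :
    x₀ * (den x₀ (n + 1) + den x₀ n * fut x₀ (n + 1)) =
      num x₀ (n + 1) + num x₀ n * fut x₀ (n + 1) := by
  induction n with
  | zero =>
    have h := fut_mul_digit_add_fut (hne 0)
    rw [fut_zero] at h
    simp only [num, den]
    push_cast
    linear_combination h
  | succ n ih =>
    have h := fut_mul_digit_add_fut (hne (n + 1))
    apply mul_left_cancel₀ (hne (n + 1))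
    simp only [num, den]
    push_cast
    linear_combination (x₀ * den x₀ (n + 1) - num x₀ (n + 1)) * h + ih

def revDigits (x₀ : ℝ) (m : ℕ) : List ℝ :=
  (List.range m).map fun i => (digit x₀ (m - i) : ℝ)

lemma revDigits_succ (x₀ : ℝ) (m : ℕ) :
    revDigits x₀ (m + 1) = (digit x₀ (m + 1) : ℝ) :: revDigits x₀ m := by
  simp [revDigits, List.range_succ_eq_map, Function.comp_def]

lemma fcf_revDigits_succ {x₀ : ℝ} (hdig : ∀ n, 1 ≤ digit x₀ (n + 1)) (m : ℕ) :
    fcf (revDigits x₀ (m + 1)) = den x₀ m / den x₀ (m + 1) := by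
  induction m with
  | zero => simp [revDigits, fcf, den]
  | succ m ih =>
    have hq : (den x₀ (m + 1) : ℝ) ≠ 0 := by exact_mod_cast (den_pos hdig _).ne'
    rw [revDigits_succ, fcf, ih]
    simp only [den]
    push_cast
    field_simp

lemma past_succ {x₀ : ℝ} (hdig : ∀ n, 1 ≤ digit x₀ (n + 1)) (m : ℕ) :
    past x₀ (m + 1) = -(den x₀ (m + 1) / den x₀ m) := by
  have hrev : past x₀ (m + 1) = -(digit x₀ (m + 1) : ℝ) - fcf (revDigits x₀ m) := by
    simp [past, revDigits]
  rw [hrev]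
  cases m with
  | zero => simp [revDigits, fcf, den]
  | succ m =>
    have hq : (den x₀ (m + 1) : ℝ) ≠ 0 := by exact_mod_cast (den_pos hdig _).ne'
    rw [fcf_revDigits_succ hdig]
    simp only [den]
    push_cast
    field_simp
    ring

lemma theta_eq_abs_mul_abs (x₀ : ℝ) (n : ℕ) :
    theta x₀ n = |(den x₀ n : ℝ)| * |x₀ * den x₀ n - num x₀ n| := by
  rcases eq_or_ne (den x₀ n : ℝ) 0 with hq | hq
  · simp [theta, hq]
  · have he : x₀ - num x₀ n / den x₀ n = (x₀ * den x₀ n - num x₀ n) / den x₀ n := by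
      field_simp
    rw [theta, he, abs_div, ← sq_abs]
    field_simp

lemma self_mul_den_sub_num_mul {x₀ : ℝ} (hne : ∀ n, fut x₀ n ≠ 0) (m : ℕ) :
    (x₀ * den x₀ m - num x₀ m) * (den x₀ (m + 1) + den x₀ m * fut x₀ (m + 1)) = (-1) ^ m ∧
      (x₀ * den x₀ (m + 1) - num x₀ (m + 1)) * (den x₀ (m + 1) + den x₀ m * fut x₀ (m + 1)) =
        -((-1) ^ m * fut x₀ (m + 1)) := by
  have hid := self_mul_den_add_den_mul_fut hne m
  have hdet : (num x₀ (m + 1) * den x₀ m - num x₀ m * den x₀ (m + 1) : ℝ) = (-1) ^ m := by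
    exact_mod_cast num_mul_den_sub_num_mul_den x₀ m
  constructor
  · linear_combination (den x₀ m : ℝ) * hid + hdet
  · linear_combination (den x₀ (m + 1) : ℝ) * hid - fut x₀ (m + 1) * hdet

lemma den_add_den_mul_fut_pos {x₀ : ℝ} (hfut : ∀ n, fut x₀ n ∈ Ioo (0 : ℝ) 1) (m : ℕ) :
    0 < (den x₀ (m + 1) + den x₀ m * fut x₀ (m + 1) : ℝ) := by
  have hdig n := one_le_digit_succ (Ioo_subset_Ioc_self (hfut n))
  have hq₀ : (0 : ℝ) < den x₀ m := by exact_mod_cast den_pos hdig m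
  have hq₁ : (0 : ℝ) < den x₀ (m + 1) := by exact_mod_cast den_pos hdig (m + 1)
  have := (hfut (m + 1)).1
  positivity

lemma theta_eq_den_div {x₀ : ℝ} (hfut : ∀ n, fut x₀ n ∈ Ioo (0 : ℝ) 1) (m : ℕ) :
    theta x₀ m = den x₀ m / (den x₀ (m + 1) + den x₀ m * fut x₀ (m + 1)) := by
  have hdig n := one_le_digit_succ (Ioo_subset_Ioc_self (hfut n))
  have hq : (0 : ℝ) < den x₀ m := by exact_mod_cast den_pos hdig m
  have hD := den_add_den_mul_fut_pos hfut m
  have herr := (self_mul_den_sub_num_mul (fun n => (hfut n).1.ne') m).1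
  rw [theta_eq_abs_mul_abs, abs_of_pos hq, eq_div_iff hD.ne', mul_assoc, ← abs_of_pos hD,
    ← abs_mul, herr]
  simp

lemma theta_succ_eq_den_mul_fut_div {x₀ : ℝ} (hfut : ∀ n, fut x₀ n ∈ Ioo (0 : ℝ) 1) (m : ℕ) :
    theta x₀ (m + 1) =
      den x₀ (m + 1) * fut x₀ (m + 1) / (den x₀ (m + 1) + den x₀ m * fut x₀ (m + 1)) := by
  have hdig n := one_le_digit_succ (Ioo_subset_Ioc_self (hfut n))
  have hq : (0 : ℝ) < den x₀ (m + 1) := by exact_mod_cast den_pos hdig (m + 1)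
  have hD := den_add_den_mul_fut_pos hfut m
  have herr := (self_mul_den_sub_num_mul (fun n => (hfut n).1.ne') m).2
  rw [theta_eq_abs_mul_abs, abs_of_pos hq, eq_div_iff hD.ne', mul_assoc, ← abs_of_pos hD,
    ← abs_mul, herr, abs_neg, abs_mul, abs_of_pos (hfut (m + 1)).1]
  simp

theorem stmt4 (x₀ : ℝ) (hx : x₀ ∈ Set.Ioo (0:ℝ) 1) (hirr : Irrational x₀)
    (n : ℕ) (hn : 1 ≤ n) :
    1 / theta x₀ n = -(fut x₀ n - past x₀ n) / (fut x₀ n * past x₀ n) ∧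
      Psi (fut x₀ n, past x₀ n) = (theta x₀ (n - 1), theta x₀ n) := by
  obtain ⟨m, rfl⟩ := Nat.exists_eq_add_of_le' hn
  have hfut := fut_mem_Ioo hx hirr
  have hdig n := one_le_digit_succ (Ioo_subset_Ioc_self (hfut n))
  have hq : (den x₀ m : ℝ) ≠ 0 := by exact_mod_cast (den_pos hdig m).ne'
  have hD := (den_add_den_mul_fut_pos hfut m).ne'
  have hPsi : Psi (fut x₀ (m + 1), past x₀ (m + 1)) = (theta x₀ m, theta x₀ (m + 1)) := by
    rw [Psi, theta_eq_den_div hfut, theta_succ_eq_den_mul_fut_div hfut, past_succ hdig]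
    ext <;> field_simp <;> ring
  refine ⟨?_, hPsi⟩
  have hθ : theta x₀ (m + 1) = (Psi (fut x₀ (m + 1), past x₀ (m + 1))).2 := by rw [hPsi]
  rw [hθ, Psi, one_div_div, div_neg, neg_div]
end
end

section
/- The image of Ω = (0,1) × (−∞,−1) under Ψ(x,y) = (1/(x−y), −xy/(x−y)) equals exactly the open triangle Γ = {(u,v) : u > 0, v > 0, u + v < 1}. -/
noncomputable section

open Real

/-! `Ψ(x, y) = (u, v)` says exactly that `x` and `-y` are the two roots of `u t² - t + v`.
For `u > 0` such a quadratic has roots `0 < x < 1 < -y` iff it is positive at `t = 0` and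
negative at `t = 1`, i.e. iff `v > 0` and `u + v < 1`; `Φ` writes the two roots down. -/

theorem Psi_mapsTo_Gam : Set.MapsTo Psi Omega Gam := by
  rintro ⟨x, y⟩ ⟨⟨hx0, hx1⟩, hy : y < -1⟩
  have hxy : 0 < x - y := by linarith
  have hprod : 0 < -(x * y) := by nlinarith
  show 0 < 1 / (x - y) ∧ 0 < -(x * y) / (x - y) ∧ 1 / (x - y) + -(x * y) / (x - y) < 1
  refine ⟨by positivity, by positivity, ?_⟩
  rw [← add_div, div_lt_one hxy]
  nlinarith

theorem Phi_mem_Omega {p : ℝ × ℝ} (hp : p ∈ Gam) : Phi p ∈ Omega := by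
  obtain ⟨u, v⟩ := p
  obtain ⟨hu, hv, huv⟩ : 0 < u ∧ 0 < v ∧ u + v < 1 := hp
  set s := √(1 - 4 * u * v)
  have hs : s < 1 := (Real.sqrt_lt' one_pos).mpr (by nlinarith)
  -- `(1 - 2u)² < 1 - 4uv` is `u + v < 1` multiplied by `4u`
  have hs_lower : |1 - 2 * u| < s := by
    rw [← Real.sqrt_sq_eq_abs]
    exact Real.sqrt_lt_sqrt (sq_nonneg _) (by nlinarith)
  obtain ⟨hs₁, hs₂⟩ := abs_lt.mp hs_lower
  have h2u : 0 < 2 * u := by linarith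
  refine ⟨⟨div_pos (by linarith) h2u, (div_lt_one h2u).mpr (by linarith)⟩, ?_⟩
  show -((1 + s) / (2 * u)) < -1
  rw [neg_lt_neg_iff, one_lt_div h2u]
  linarith

theorem Psi_Phi {p : ℝ × ℝ} (hu : p.1 ≠ 0) (hd : 0 ≤ 1 - 4 * p.1 * p.2) :
    Psi (Phi p) = p := by
  obtain ⟨u, v⟩ := p
  have hs := Real.sq_sqrt hd
  have hdiff :
      (1 - √(1 - 4 * u * v)) / (2 * u) - -((1 + √(1 - 4 * u * v)) / (2 * u)) = 1 / u := by
    field_simp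
    ring
  simp only [Psi, Phi, hdiff, one_div_one_div, Prod.mk.injEq, true_and]
  field_simp
  linear_combination -hs

theorem stmt7 : Psi '' Omega = Gam := by
  refine Psi_mapsTo_Gam.image_subset.antisymm fun p hp =>
    ⟨Phi p, Phi_mem_Omega hp, Psi_Phi hp.1.ne' ?_⟩
  obtain ⟨hu, hv, huv⟩ := hp
  -- `4uv ≤ (u + v)² < 1`
  nlinarith [sq_nonneg (p.1 - p.2)]
end
end

section
/- The map Φ(u,v) = ((1 − √(1 − 4uv))/(2u), −(1 + √(1 − 4uv))/(2u)) maps the open triangle Γ = {(u,v) : u > 0, v > 0, u + v < 1} into Ω = (0,1) × (−∞,−1), and is a right inverse of Ψ(x,y) = (1/(x−y), −xy/(x−y)): Ψ(Φ(u,v)) = (u,v) for all (u,v) ∈ Γ. -/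
noncomputable section

open Real

theorem stmt11 : Set.MapsTo Phi Gam Omega ∧ ∀ p ∈ Gam, Psi (Phi p) = p := by
  have key : ∀ p ∈ Gam, (0 < (Phi p).1 ∧ (Phi p).1 < 1 ∧ (Phi p).2 < -1) ∧ Psi (Phi p) = p := by
    rintro ⟨u, v⟩ ⟨hu, hv, hsum⟩
    simp only at hu hv hsum
    set s := Real.sqrt (1 - 4 * u * v) with hs
    have hpos : 0 < 1 - 4 * u * v := by nlinarith [sq_nonneg (u - v), mul_pos hu hv]
    have hs2 : s ^ 2 = 1 - 4 * u * v := Real.sq_sqrt hpos.le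
    have hs0 : 0 < s := Real.sqrt_pos.mpr hpos
    have hslt1 : s < 1 := by
      nlinarith [hs2, hs0]
    have hsgt : 1 - 2 * u < s := by
      rcases le_or_gt (1 - 2 * u) 0 with h | h
      · linarith
      · nlinarith [hs2, hs0]
    have hsgt2 : 2 * u - 1 < s := by
      rcases le_or_gt (2 * u - 1) 0 with h | h
      · linarith
      · nlinarith [hs2, hs0]
    have hx1 : (Phi (u, v)).1 = (1 - s) / (2 * u) := rfl
    have hy1 : (Phi (u, v)).2 = -((1 + s) / (2 * u)) := rfl
    constructor
    · refine ⟨?_, ?_, ?_⟩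
      · rw [hx1]; exact div_pos (by linarith) (by linarith)
      · rw [hx1, div_lt_one (by linarith)]; linarith
      · rw [hy1, neg_lt, neg_neg, lt_div_iff₀ (by linarith)]; linarith
    · have hsub : (Phi (u, v)).1 - (Phi (u, v)).2 = 1 / u := by
        rw [hx1, hy1]; field_simp; try ring
      have hmul : (Phi (u, v)).1 * (Phi (u, v)).2 = -(v / u) := by
        rw [hx1, hy1]
        field_simp
        nlinarith [hs2]
      show Psi (Phi (u, v)) = (u, v)
      unfold Psi
      rw [hsub, hmul]
      rw [Prod.mk.injEq]
      constructor
      · exact one_div_one_div u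
      · field_simp
  constructor
  · intro p hp
    obtain ⟨⟨h1, h2, h3⟩, _⟩ := key p hp
    exact ⟨⟨h1, h2⟩, h3⟩
  · exact fun p hp => (key p hp).2
end
end

section
/- Ψ: Ω → Γ is a homeomorphism, where Ψ(x,y) = (1/(x−y), −xy/(x−y)), Ω = (0,1)×(−∞,−1), and Γ is the open triangle with vertices (0,0),(1,0),(0,1). -/
/-!
`Ψ` and `Φ` are inverse to each other because `x` and `-y` are the two roots of
`u t² - t + v = 0` when `(u, v) = Ψ(x, y)`: indeed `1/u = x - y` and `v/u = -x y`, and on `Ω` the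
discriminant `1 - 4 u v = ((x + y)/(x - y))²` has square root `-(x + y)/(x - y)`. Both maps are
given by formulas continuous away from the lines `x = y` and `u = 0` respectively.
-/

noncomputable section

open Real

open Set

lemma mapsTo_Psi_Omega_Gam : MapsTo Psi Omega Gam := by
  rintro ⟨x, y⟩ ⟨⟨hx0, hx1⟩, hy⟩
  simp only [mem_Iio] at hy
  have hd : 0 < x - y := by linarith
  refine ⟨?_, ?_, ?_⟩
  · show 0 < 1 / (x - y)
    positivity
  · show 0 < -(x * y) / (x - y)
    exact div_pos (by nlinarith) hd
  · show 1 / (x - y) + -(x * y) / (x - y) < 1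
    rw [← add_div, div_lt_one hd]
    nlinarith

lemma sq_sqrt_discr_of_mem_Gam {u v : ℝ} (h : (u, v) ∈ Gam) :
    Real.sqrt (1 - 4 * u * v) ^ 2 = 1 - 4 * u * v := by
  obtain ⟨hu, hv, huv⟩ := h
  exact Real.sq_sqrt (by nlinarith [sq_nonneg (u - v)])

lemma mapsTo_Phi_Gam_Omega : MapsTo Phi Gam Omega := by
  rintro ⟨u, v⟩ hG
  have hs2 := sq_sqrt_discr_of_mem_Gam hG
  obtain ⟨hu, hv, huv⟩ := hG
  simp only at hu hv huv
  simp only [Phi]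
  set s := Real.sqrt (1 - 4 * u * v)
  have hs0 : 0 ≤ s := Real.sqrt_nonneg _
  have hs1 : s < 1 := by nlinarith
  have hlo : 2 * u - 1 < s := by nlinarith [sq_nonneg (s - (2 * u - 1))]
  have hhi : 1 - 2 * u < s := by nlinarith [sq_nonneg (s - (1 - 2 * u))]
  refine ⟨⟨div_pos (by linarith) (by linarith), ?_⟩, ?_⟩
  · show (1 - s) / (2 * u) < 1
    rw [div_lt_one (by linarith)]
    linarith
  · show -((1 + s) / (2 * u)) < -1
    rw [neg_lt_neg_iff, lt_div_iff₀ (by linarith)]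
    linarith

lemma leftInvOn_Phi_Psi : LeftInvOn Phi Psi Omega := by
  rintro ⟨x, y⟩ ⟨⟨hx0, hx1⟩, hy⟩
  simp only [mem_Iio] at hy
  have hd : 0 < x - y := by linarith
  have hdiscr : 1 - 4 * (1 / (x - y)) * (-(x * y) / (x - y)) = (-(x + y) / (x - y)) ^ 2 := by
    field_simp
    ring
  simp only [Phi, Psi]
  rw [hdiscr, Real.sqrt_sq (div_nonneg (by linarith) hd.le)]
  refine Prod.ext ?_ ?_ <;> dsimp only <;> field_simp <;> ring

lemma rightInvOn_Phi_Psi : RightInvOn Phi Psi Gam := by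
  rintro ⟨u, v⟩ hG
  have hs2 := sq_sqrt_discr_of_mem_Gam hG
  obtain ⟨hu, -, -⟩ := hG
  simp only at hu
  simp only [Phi, Psi]
  set s := Real.sqrt (1 - 4 * u * v)
  have hroots_sub : (1 - s) / (2 * u) - -((1 + s) / (2 * u)) = 1 / u := by
    field_simp
    ring
  refine Prod.ext ?_ ?_ <;> dsimp only <;> rw [hroots_sub]
  · rw [one_div_one_div]
  · field_simp
    nlinarith

lemma continuousOn_Psi : ContinuousOn Psi {p | p.1 ≠ p.2} := by
  unfold Psi
  fun_prop (disch := exact fun p hp => sub_ne_zero.mpr hp)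

lemma continuousOn_Phi : ContinuousOn Phi {p | p.1 ≠ 0} := by
  unfold Phi
  fun_prop (disch := exact fun p hp => mul_ne_zero two_ne_zero hp)

def psiPartialHomeomorph : PartialHomeomorph (ℝ × ℝ) (ℝ × ℝ) where
  toFun := Psi
  invFun := Phi
  source := Omega
  target := Gam
  map_source' := mapsTo_Psi_Omega_Gam
  map_target' := mapsTo_Phi_Gam_Omega
  left_inv' := leftInvOn_Phi_Psi
  right_inv' := rightInvOn_Phi_Psi
  continuousOn_toFun := continuousOn_Psi.mono fun _ ⟨⟨_, hx⟩, hy⟩ =>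
    ne_of_gt (show (_ : ℝ) < _ from (mem_Iio.mp hy).trans (by linarith))
  continuousOn_invFun := continuousOn_Phi.mono fun _ hp => ne_of_gt hp.1

theorem stmt13 : ∃ h : Omega ≃ₜ Gam, ∀ p : Omega, (h p : ℝ × ℝ) = Psi p :=
  ⟨psiPartialHomeomorph.toHomeomorphSourceTarget, fun _ => rfl⟩
end
end
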